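/- For every s > 0, every n ∈ ℕ with n ≥ 1, and all θ, θ* > 0, all the integrals below converge absolutely and (Γ(2s)/Γ(2s+n)) · ∫₀^∞ γ_θ(x) [ ∫₀¹ u^{−1}(1−u)^{2s−1} (((1−u)x)^n − x^n) du + ∫₀^∞ u^{−1} e^{−u} ((x + uθ*)^n − x^n) du ] dx = ∫₀¹ u^{−1}(1−u)^{2s−1} [ ((1−u)θ + uθ*)^n − θ^n ] du. (This is the intertwining, on monomials, of the boundary generator of the generalized continuous harmonic model with parameter s with the boundary generator of its hidden-parameter model via the Gamma kernel.) -/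

import Mathlib

open MeasureTheory Real Set

/-- The Gamma(shape 2s, scale θ) density on (0,∞). -/
noncomputable def gammaDens (s θ x : ℝ) : ℝ :=
  x ^ (2 * s - 1) * Real.exp (-x / θ) / (θ ^ (2 * s) * Real.Gamma (2 * s))

/-!
Every integral here is a finite combination of Beta and Gamma integrals. On `x ^ n`, the
contraction part of `L_{θ*}` gives `-(∑ j < n, (2s + j)⁻¹) x ^ n`, by the geometric sum
`(1 - u) ^ n - 1 = -u ∑ j < n, (1 - u) ^ j`, and the reservoir part gives
`∑ k < n, C(n, k) (n - k - 1)! θ* ^ (n - k) x ^ k`, by the binomial theorem and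
`∫ e^{-u} u ^ m = m!`. Integrating against `γ_θ` turns `x ^ k` into
`θ ^ k Γ(2s + k) / Γ(2s)`. On the hidden-parameter side, the binomial theorem produces the
Beta integrals `B(2s + k, n - k) = (n - k - 1)! Γ(2s + k) / Γ(2s + n)`, and the prefactor
`Γ(2s) / Γ(2s + n)` is exactly what matches the two sides.
-/

open Finset
open scoped Nat

def HasSetIntegral {α : Type*} [MeasurableSpace α] (f : α → ℝ) (s : Set α) (v : ℝ)
    (μ : Measure α := by volume_tac) : Prop :=
  IntegrableOn f s μ ∧ ∫ x in s, f x ∂μ = v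

namespace HasSetIntegral

variable {α : Type*} [MeasurableSpace α] {μ : Measure α} {s : Set α} {f g : α → ℝ}
  {a b : ℝ}

theorem congr (h : HasSetIntegral f s a μ) (hs : MeasurableSet s) (hfg : EqOn f g s) :
    HasSetIntegral g s a μ :=
  ⟨h.1.congr_fun hfg hs, (setIntegral_congr_fun hs hfg).symm.trans h.2⟩

theorem const_mul (h : HasSetIntegral f s a μ) (c : ℝ) :
    HasSetIntegral (fun x => c * f x) s (c * a) μ :=
  ⟨h.1.const_mul c, by rw [integral_const_mul, h.2]⟩

theorem add (hf : HasSetIntegral f s a μ) (hg : HasSetIntegral g s b μ) :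
    HasSetIntegral (fun x => f x + g x) s (a + b) μ :=
  ⟨hf.1.add hg.1, by rw [integral_add hf.1 hg.1, hf.2, hg.2]⟩

theorem sum {ι : Type*} {t : Finset ι} {f : ι → α → ℝ} {a : ι → ℝ}
    (h : ∀ i ∈ t, HasSetIntegral (f i) s (a i) μ) :
    HasSetIntegral (fun x => ∑ i ∈ t, f i x) s (∑ i ∈ t, a i) μ :=
  ⟨integrable_finsetSum t fun i hi => (h i hi).1, by
    rw [integral_finsetSum t fun i hi => (h i hi).1]
    exact Finset.sum_congr rfl fun i hi => (h i hi).2⟩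

end HasSetIntegral

theorem hasSetIntegral_rpow_mul_one_sub_rpow {a c : ℝ} (ha : 0 < a) (hc : 0 < c) :
    HasSetIntegral (fun u : ℝ => u ^ (a - 1) * (1 - u) ^ (c - 1)) (Ioo 0 1)
      (Gamma a * Gamma c / Gamma (a + c)) := by
  have hcpx : (fun u : ℝ => (u : ℂ) ^ ((a : ℂ) - 1) * (1 - (u : ℂ)) ^ ((c : ℂ) - 1))
      =ᵐ[volume.restrict (Ioc 0 1)] fun u => ((u ^ (a - 1) * (1 - u) ^ (c - 1) : ℝ) : ℂ) := by
    filter_upwards [ae_restrict_mem measurableSet_Ioc] with u hu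
    rw [Complex.ofReal_mul, Complex.ofReal_cpow hu.1.le,
      Complex.ofReal_cpow (sub_nonneg.mpr hu.2)]
    push_cast
    rfl
  have hconv := Complex.betaIntegral_convergent (u := a) (v := c) (by simpa) (by simpa)
  rw [intervalIntegrable_iff_integrableOn_Ioc_of_le zero_le_one] at hconv
  have hint : IntegrableOn (fun u : ℝ => u ^ (a - 1) * (1 - u) ^ (c - 1)) (Ioc 0 1) :=
    by simpa [IntegrableOn] using (hconv.congr hcpx).re
  refine ⟨hint.mono_set Ioo_subset_Ioc_self, Complex.ofReal_injective ?_⟩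
  have hB := Complex.betaIntegral_eq_Gamma_mul_div a c (by simpa) (by simpa)
  rw [Complex.betaIntegral, intervalIntegral.integral_of_le zero_le_one, integral_congr_ae hcpx,
    integral_complex_ofReal, integral_Ioc_eq_integral_Ioo] at hB
  rw [hB, ← Complex.ofReal_add, Complex.Gamma_ofReal, Complex.Gamma_ofReal, Complex.Gamma_ofReal]
  norm_cast

theorem hasSetIntegral_pow_mul_one_sub_rpow {c : ℝ} (hc : 0 < c) (m : ℕ) :
    HasSetIntegral (fun u : ℝ => u ^ m * (1 - u) ^ (c - 1)) (Ioo 0 1)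
      (m ! * Gamma c / Gamma (c + m + 1)) := by
  have h := hasSetIntegral_rpow_mul_one_sub_rpow (a := m + 1) (by positivity) hc
  rw [Gamma_nat_eq_factorial, add_comm _ c, ← add_assoc] at h
  refine h.congr measurableSet_Ioo fun u _ => ?_
  simp

theorem hasSetIntegral_one_sub_rpow {c : ℝ} (hc : 0 < c) :
    HasSetIntegral (fun u : ℝ => (1 - u) ^ (c - 1)) (Ioo 0 1) c⁻¹ := by
  have h := hasSetIntegral_pow_mul_one_sub_rpow hc 0
  rw [Nat.cast_zero, add_zero, Gamma_add_one hc.ne', Nat.factorial_zero, Nat.cast_one] at h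
  convert h using 1
  · simp
  · field_simp [(Gamma_pos_of_pos hc).ne']

theorem hasSetIntegral_exp_neg_mul_pow (m : ℕ) :
    HasSetIntegral (fun u : ℝ => exp (-u) * u ^ m) (Ioi 0) m ! := by
  have hm : (0 : ℝ) < m + 1 := by positivity
  have h : HasSetIntegral (fun u : ℝ => exp (-u) * u ^ ((m + 1 : ℝ) - 1)) (Ioi 0) m ! :=
    ⟨GammaIntegral_convergent hm, by rw [← Gamma_eq_integral hm, Gamma_nat_eq_factorial]⟩
  exact h.congr measurableSet_Ioi fun u _ => by simp

theorem hasSetIntegral_gammaDens_mul_pow {s θ : ℝ} (hs : 0 < s) (hθ : 0 < θ) (m : ℕ) :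
    HasSetIntegral (fun x => gammaDens s θ x * x ^ m) (Ioi 0)
      (θ ^ m * Gamma (2 * s + m) / Gamma (2 * s)) := by
  have hval := integral_rpow_mul_exp_neg_mul_Ioi (a := 2 * s + m) (by positivity) (inv_pos.mpr hθ)
  have hint : IntegrableOn (fun x : ℝ => x ^ (2 * s + m - 1) * exp (-(θ⁻¹ * x))) (Ioi 0) :=
    Integrable.of_integral_ne_zero (by rw [hval]; positivity)
  have h := (HasSetIntegral.const_mul (⟨hint, hval⟩ : HasSetIntegral _ (Ioi (0 : ℝ)) _)
    (θ ^ (2 * s) * Gamma (2 * s))⁻¹).congr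
    (g := fun x => gammaDens s θ x * x ^ m) measurableSet_Ioi fun x (hx : 0 < x) => by
      dsimp only
      rw [gammaDens, show 2 * s + m - 1 = (2 * s - 1) + m by ring, rpow_add hx, rpow_natCast]
      field_simp
  convert h using 1
  rw [one_div, inv_inv, rpow_add hθ, rpow_natCast]
  field_simp [(Gamma_pos_of_pos (by positivity : 0 < 2 * s)).ne']

theorem add_mul_pow_sub_pow {R : Type*} [CommRing R] (x y u : R) (n : ℕ) :
    (x + u * y) ^ n - x ^ n
      = u * ∑ k ∈ range n, x ^ k * y ^ (n - k) * n.choose k * u ^ (n - k - 1) := by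
  rw [add_pow, sum_range_succ, Nat.sub_self, pow_zero, mul_one, Nat.choose_self, Nat.cast_one,
    mul_one, add_sub_cancel_right, mul_sum]
  refine sum_congr rfl fun k hk => ?_
  obtain ⟨j, rfl⟩ := Nat.exists_eq_add_of_lt (mem_range.mp hk)
  rw [show k + j + 1 - k = j + 1 by omega, Nat.add_sub_cancel]
  ring

theorem hasSetIntegral_contract_pow {c : ℝ} (hc : 0 < c) (n : ℕ) (x : ℝ) :
    HasSetIntegral (fun u : ℝ => u⁻¹ * (1 - u) ^ (c - 1) * (((1 - u) * x) ^ n - x ^ n))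
      (Ioo 0 1) (-(∑ j ∈ range n, (c + j)⁻¹) * x ^ n) := by
  have h := HasSetIntegral.sum fun j (_ : j ∈ range n) =>
    (hasSetIntegral_one_sub_rpow (c := c + j) (by positivity)).const_mul (-x ^ n)
  rw [← mul_sum, neg_mul_comm, mul_comm] at h
  refine h.congr measurableSet_Ioo fun u ⟨hu0, hu1⟩ => ?_
  have hgeom : ((1 - u) * x) ^ n - x ^ n = -u * x ^ n * ∑ j ∈ range n, (1 - u) ^ j := by
    rw [mul_pow]
    linear_combination (-x ^ n) * geom_sum_mul (1 - u) n
  have hsum : ∀ j : ℕ, (1 - u) ^ ((c + j) - 1) = (1 - u) ^ (c - 1) * (1 - u) ^ j := fun j => by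
    rw [add_sub_right_comm, rpow_add (sub_pos.mpr hu1), rpow_natCast]
  simp only [hsum, ← mul_sum, hgeom]
  field_simp

theorem hasSetIntegral_shift_pow (n : ℕ) (x y : ℝ) :
    HasSetIntegral (fun u : ℝ => u⁻¹ * exp (-u) * ((x + u * y) ^ n - x ^ n)) (Ioi 0)
      (∑ k ∈ range n, x ^ k * y ^ (n - k) * n.choose k * (n - k - 1)!) := by
  refine (HasSetIntegral.sum fun k (_ : k ∈ range n) =>
    (hasSetIntegral_exp_neg_mul_pow (n - k - 1)).const_mul (x ^ k * y ^ (n - k) * n.choose k)).congr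
    measurableSet_Ioi fun u (hu : 0 < u) => ?_
  rw [add_mul_pow_sub_pow, mul_sum, mul_sum]
  refine sum_congr rfl fun k _ => ?_
  field_simp

theorem hasSetIntegral_convex_shift_pow {c : ℝ} (hc : 0 < c) (n : ℕ) (x y : ℝ) :
    HasSetIntegral (fun u : ℝ => u⁻¹ * (1 - u) ^ (c - 1) * (((1 - u) * x + u * y) ^ n - x ^ n))
      (Ioo 0 1)
      (∑ k ∈ range n,
          x ^ k * y ^ (n - k) * n.choose k * ((n - k - 1)! * Gamma (c + k) / Gamma (c + n))
        + -(∑ j ∈ range n, (c + j)⁻¹) * x ^ n) := by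
  have hbeta : ∀ k ∈ range n,
      HasSetIntegral (fun u : ℝ => u ^ (n - k - 1) * (1 - u) ^ ((c + k) - 1)) (Ioo 0 1)
        ((n - k - 1)! * Gamma (c + k) / Gamma (c + n)) := fun k hk => by
    have h := hasSetIntegral_pow_mul_one_sub_rpow (c := c + k) (by positivity) (n - k - 1)
    have hcast : ((n - k - 1 : ℕ) : ℝ) = n - k - 1 := by
      rw [Nat.sub_sub, Nat.cast_sub (mem_range.mp hk)]
      push_cast
      ring
    rwa [hcast, show c + k + (n - k - 1) + 1 = c + n by ring] at h
  refine ((HasSetIntegral.sum fun k hk =>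
    (hbeta k hk).const_mul (x ^ k * y ^ (n - k) * n.choose k)).add
    (hasSetIntegral_contract_pow hc n x)).congr measurableSet_Ioo fun u ⟨hu0, hu1⟩ => ?_
  have hsplit : ((1 - u) * x + u * y) ^ n - x ^ n
      = (((1 - u) * x + u * y) ^ n - ((1 - u) * x) ^ n) + (((1 - u) * x) ^ n - x ^ n) := by ring
  dsimp only
  rw [hsplit, mul_add, add_mul_pow_sub_pow, mul_sum, mul_sum]
  congr 1
  refine sum_congr rfl fun k _ => ?_
  rw [add_sub_right_comm, rpow_add (sub_pos.mpr hu1), rpow_natCast, mul_pow]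
  field_simp

theorem gen_harmonic_boundary_intertwining (s : ℝ) (hs : 0 < s) (n : ℕ)
    (θ θs : ℝ) (hθ : 0 < θ) :
    (∀ x : ℝ, 0 ≤ x →
      IntegrableOn (fun u : ℝ => u⁻¹ * (1 - u) ^ (2 * s - 1) * (((1 - u) * x) ^ n - x ^ n))
        (Set.Ioo 0 1) volume) ∧
    (∀ x : ℝ, 0 ≤ x →
      IntegrableOn (fun u : ℝ => u⁻¹ * Real.exp (-u) * ((x + u * θs) ^ n - x ^ n))
        (Set.Ioi 0) volume) ∧
    IntegrableOn (fun x : ℝ => gammaDens s θ x *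
      ((∫ u in Set.Ioo (0:ℝ) 1, u⁻¹ * (1 - u) ^ (2 * s - 1) * (((1 - u) * x) ^ n - x ^ n)) +
       (∫ u in Set.Ioi (0:ℝ), u⁻¹ * Real.exp (-u) * ((x + u * θs) ^ n - x ^ n))))
      (Set.Ioi 0) volume ∧
    IntegrableOn (fun u : ℝ => u⁻¹ * (1 - u) ^ (2 * s - 1) * (((1 - u) * θ + u * θs) ^ n - θ ^ n))
      (Set.Ioo 0 1) volume ∧
    (Real.Gamma (2 * s) / Real.Gamma (2 * s + n)) *
      (∫ x in Set.Ioi (0:ℝ), gammaDens s θ x *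
        ((∫ u in Set.Ioo (0:ℝ) 1, u⁻¹ * (1 - u) ^ (2 * s - 1) * (((1 - u) * x) ^ n - x ^ n)) +
         (∫ u in Set.Ioi (0:ℝ), u⁻¹ * Real.exp (-u) * ((x + u * θs) ^ n - x ^ n))))
      = ∫ u in Set.Ioo (0:ℝ) 1,
          u⁻¹ * (1 - u) ^ (2 * s - 1) * (((1 - u) * θ + u * θs) ^ n - θ ^ n) := by
  have hc : 0 < 2 * s := by positivity
  set H := ∑ j ∈ range n, (2 * s + j)⁻¹
  set b : ℕ → ℝ := fun k => θs ^ (n - k) * n.choose k * (n - k - 1)!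
  have hgen : ∀ x : ℝ,
      (∫ u in Ioo (0:ℝ) 1, u⁻¹ * (1 - u) ^ (2 * s - 1) * (((1 - u) * x) ^ n - x ^ n)) +
        (∫ u in Ioi (0:ℝ), u⁻¹ * exp (-u) * ((x + u * θs) ^ n - x ^ n))
        = -H * x ^ n + ∑ k ∈ range n, b k * x ^ k := fun x => by
    rw [(hasSetIntegral_contract_pow hc n x).2, (hasSetIntegral_shift_pow n x θs).2]
    congr 1
    exact sum_congr rfl fun k _ => by ring
  have hkernel := (((hasSetIntegral_gammaDens_mul_pow hs hθ n).const_mul (-H)).add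
    (HasSetIntegral.sum fun k (_ : k ∈ range n) =>
      (hasSetIntegral_gammaDens_mul_pow hs hθ k).const_mul (b k))).congr
    (g := fun x => gammaDens s θ x * (-H * x ^ n + ∑ k ∈ range n, b k * x ^ k))
    measurableSet_Ioi fun x _ => by simp only [mul_add, mul_sum, mul_left_comm]
  have hrhs := hasSetIntegral_convex_shift_pow hc n θ θs
  simp only [hgen]
  refine ⟨fun x _ => (hasSetIntegral_contract_pow hc n x).1,
    fun x _ => (hasSetIntegral_shift_pow n x θs).1, hkernel.1, hrhs.1, ?_⟩
  have hΓ : Gamma (2 * s) ≠ 0 := (Gamma_pos_of_pos hc).ne'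
  have hΓn : Gamma (2 * s + n) ≠ 0 := (Gamma_pos_of_pos (by positivity)).ne'
  rw [hkernel.2, hrhs.2, mul_add, mul_sum, add_comm]
  congr 1
  · exact sum_congr rfl fun k _ => by simp only [b]; field_simp
  · simp only [H]
    field_simp
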